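/- Let A, B be strings of lengths m and n, σ a character, and define Diff[i,j] = LCS(B[i..n], σ·A[0..j]) − P[i,j] for (i,j) ∈ [0:n]×[0:m]. Assume every entry of the density matrix P□ is nonpositive. Then for all 0 ≤ i ≤ n and 0 ≤ j' ≤ j ≤ m, if Diff[i,j] = 1 then Diff[i,j'] = 1. -/

import Mathlib

/-!
Write `X = B[i..n]`. If `σ ∉ X` then prepending `σ` to `A[0..j]` changes nothing, so
`Diff[i,j] = 0`. Otherwise split `X = X₁ ++ σ :: B[k..n]` at the first occurrence of `σ`: a common
subsequence either ignores the new `σ` or matches it there, so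
`LCS(X, σ·A[0..j]) = max (P[i,j]) (P[k,j] + 1)`, and `Diff[i,j] = 1` iff `P[k,j] = P[i,j]`.
Anti-Monge gives `P[k,j] - P[k,j'] ≤ P[i,j] - P[i,j']` for `i ≤ k`, `j' ≤ j`, hence
`P[i,j'] ≤ P[k,j']`; the reverse inequality holds because `B[k..n]` is a sublist of `X`.
-/

variable {α : Type*}

/-- LCS of two lists: the maximum length of a common sublist. -/
noncomputable def LCS (X Y : List α) : ℕ :=
  sSup {k | ∃ Z : List α, Z.length = k ∧ Z.Sublist X ∧ Z.Sublist Y}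

/-- `substr S i j` is S[i..j]: the characters of S at (1-based) positions i+1,…,j. -/
def substr (S : List α) (i j : ℕ) : List α := (S.take j).drop i

/-- The density matrix D□ of a matrix D. -/
def density (D : ℕ → ℕ → ℤ) (i j : ℕ) : ℤ :=
  D i j + D (i - 1) (j - 1) - D (i - 1) j - D i (j - 1)

/-- The all scores matrix K of A and B: K[i,j] = LCS(B[i..j], A) if i ≤ j, else j - i. -/
noncomputable def Kmat (A B : List α) (i j : ℕ) : ℤ :=
  if i ≤ j then (LCS (substr B i j) A : ℤ) else (j : ℤ) - (i : ℤ)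

/-- The all scores matrix P of A and B: P[i,j] = LCS(B[i..n], A[0..j]). -/
noncomputable def Pmat (A B : List α) (i j : ℕ) : ℤ :=
  (LCS (substr B i B.length) (substr A 0 j) : ℤ)

/-- nextmatch(i,σ,B): minimum (1-based) position i' with i < i' ≤ |B| and B[i'] = σ; ⊤ (∞) if none. -/
noncomputable def nextmatch (i : ℕ) (σ : α) (B : List α) : ℕ∞ :=
  sInf {k : ℕ∞ | ∃ k' : ℕ, k = (k' : ℕ∞) ∧ i < k' ∧ k' ≤ B.length ∧ B[k' - 1]? = some σ}

/-- prevmatch(j,σ,B): maximum (1-based) position i' with 1 ≤ i' ≤ j and B[i'] = σ; ⊥ (−∞) if none. -/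
noncomputable def prevmatch (j : ℕ) (σ : α) (B : List α) : WithBot ℕ :=
  sSup {k : WithBot ℕ | ∃ k' : ℕ, k = (k' : WithBot ℕ) ∧ 1 ≤ k' ∧ k' ≤ j ∧ B[k' - 1]? = some σ}

lemma LCS_set_nonempty (X Y : List α) :
    {k | ∃ Z : List α, Z.length = k ∧ Z.Sublist X ∧ Z.Sublist Y}.Nonempty :=
  ⟨0, [], rfl, List.nil_sublist _, List.nil_sublist _⟩

lemma LCS_set_bddAbove (X Y : List α) :
    BddAbove {k | ∃ Z : List α, Z.length = k ∧ Z.Sublist X ∧ Z.Sublist Y} :=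
  ⟨X.length, by rintro k ⟨Z, rfl, hX, -⟩; exact hX.length_le⟩

lemma le_LCS {X Y Z : List α} (hX : Z.Sublist X) (hY : Z.Sublist Y) : Z.length ≤ LCS X Y :=
  le_csSup (LCS_set_bddAbove X Y) ⟨Z, rfl, hX, hY⟩

lemma LCS_le {X Y : List α} {k : ℕ}
    (h : ∀ Z : List α, Z.Sublist X → Z.Sublist Y → Z.length ≤ k) : LCS X Y ≤ k :=
  csSup_le (LCS_set_nonempty X Y) (by rintro _ ⟨Z, rfl, hX, hY⟩; exact h Z hX hY)

lemma exists_sublist_length_eq_LCS (X Y : List α) :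
    ∃ Z : List α, Z.length = LCS X Y ∧ Z.Sublist X ∧ Z.Sublist Y :=
  Nat.sSup_mem (LCS_set_nonempty X Y) (LCS_set_bddAbove X Y)

lemma LCS_mono_left {X X' Y : List α} (h : X.Sublist X') : LCS X Y ≤ LCS X' Y := by
  obtain ⟨Z, hZ, hX, hY⟩ := exists_sublist_length_eq_LCS X Y
  exact hZ ▸ le_LCS (hX.trans h) hY

lemma LCS_mono_right {X Y Y' : List α} (h : Y.Sublist Y') : LCS X Y ≤ LCS X Y' := by
  obtain ⟨Z, hZ, hX, hY⟩ := exists_sublist_length_eq_LCS X Y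
  exact hZ ▸ le_LCS hX (hY.trans h)

lemma LCS_cons_right_of_not_mem {X Y : List α} {σ : α} (h : σ ∉ X) :
    LCS X (σ :: Y) = LCS X Y := by
  refine le_antisymm (LCS_le fun Z hX hY => ?_) (LCS_mono_right (List.sublist_cons_self σ Y))
  rcases List.sublist_cons_iff.mp hY with hY | ⟨Z, rfl, -⟩
  · exact le_LCS hX hY
  · exact absurd (hX.subset List.mem_cons_self) h

/-- A common subsequence that uses the prepended `σ` can match it with the first `σ` of `X`. -/
lemma LCS_append_cons_cons_right {X₁ X₂ Y : List α} {σ : α} (hσ : σ ∉ X₁) :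
    LCS (X₁ ++ σ :: X₂) (σ :: Y) = max (LCS (X₁ ++ σ :: X₂) Y) (LCS X₂ Y + 1) := by
  refine le_antisymm (LCS_le fun Z hX hY => ?_) (max_le ?_ ?_)
  · rcases List.sublist_cons_iff.mp hY with hY | ⟨r, rfl, hr⟩
    · exact (le_LCS hX hY).trans (le_max_left _ _)
    · obtain ⟨u, v, huv, hu, hv⟩ := List.sublist_append_iff.mp hX
      have hrX : r.Sublist X₂ := by
        cases u with
        | nil =>
          rw [List.nil_append] at huv
          exact List.cons_sublist_cons.mp (huv ▸ hv)
        | cons c u =>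
          obtain rfl : σ = c := (List.cons_eq_cons.mp huv).1
          exact absurd (hu.subset List.mem_cons_self) hσ
      exact (Nat.add_le_add_right (le_LCS hrX hr) 1).trans (le_max_right _ _)
  · exact LCS_mono_right (List.sublist_cons_self σ Y)
  · obtain ⟨Z, hZ, hX, hY⟩ := exists_sublist_length_eq_LCS X₂ Y
    have hX' : (σ :: Z).Sublist (X₁ ++ σ :: X₂) :=
      (List.cons_sublist_cons.mpr hX).trans (List.sublist_append_right X₁ (σ :: X₂))
    simpa [hZ] using le_LCS hX' (List.cons_sublist_cons.mpr hY)

lemma LCS_le_LCS_append_cons (X₁ X₂ Y : List α) (σ : α) :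
    LCS X₂ Y ≤ LCS (X₁ ++ σ :: X₂) Y :=
  LCS_mono_left ((List.sublist_cons_self σ X₂).trans (List.sublist_append_right X₁ _))

lemma LCS_append_cons_cons_right_eq_succ_iff {X₁ X₂ Y : List α} {σ : α} (hσ : σ ∉ X₁) :
    LCS (X₁ ++ σ :: X₂) (σ :: Y) = LCS (X₁ ++ σ :: X₂) Y + 1 ↔
      LCS X₂ Y = LCS (X₁ ++ σ :: X₂) Y := by
  have := LCS_le_LCS_append_cons X₁ X₂ Y σ
  rw [LCS_append_cons_cons_right hσ]
  omega

lemma List.exists_drop_eq_append_cons_drop {l : List α} {σ : α} {i : ℕ} (h : σ ∈ l.drop i) :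
    ∃ s k, i < k ∧ k ≤ l.length ∧ l.drop i = s ++ σ :: l.drop k ∧ σ ∉ s := by
  classical
  obtain ⟨s, t, hs, hl, -⟩ := List.exists_erase_eq h
  have hlen := congrArg List.length hl
  simp only [List.length_drop, List.length_append, List.length_cons] at hlen
  refine ⟨s, i + s.length + 1, by omega, by omega, ?_, hs⟩
  rw [hl, ← List.drop_drop, ← List.drop_drop, hl]
  simp

/-- Summing the density over the rectangle `(i₁, i₂] × (j₁, j₂]`. -/
lemma sub_le_sub_of_density_nonpos {D : ℕ → ℕ → ℤ} {n m : ℕ}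
    (hD : ∀ i, 1 ≤ i → i ≤ n → ∀ j, 1 ≤ j → j ≤ m → density D i j ≤ 0)
    {i₁ i₂ j₁ j₂ : ℕ} (hi : i₁ ≤ i₂) (hi₂ : i₂ ≤ n) (hj : j₁ ≤ j₂) (hj₂ : j₂ ≤ m) :
    D i₂ j₂ - D i₂ j₁ ≤ D i₁ j₂ - D i₁ j₁ := by
  have row_step : ∀ r, r + 1 ≤ n → ∀ c, j₁ ≤ c → c ≤ m →
      D (r + 1) c - D (r + 1) j₁ ≤ D r c - D r j₁ := by
    intro r hr c hc hcm
    induction c, hc using Nat.le_induction with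
    | base => simp
    | succ c hc ih =>
      have := hD (r + 1) (by omega) hr (c + 1) (by omega) hcm
      simp only [density, Nat.add_sub_cancel] at this
      linarith [ih (by omega)]
  induction i₂, hi using Nat.le_induction with
  | base => rfl
  | succ r _ ih => linarith [ih (by omega), row_step r hi₂ j₂ hj hj₂]

lemma substr_zero_left (S : List α) (j : ℕ) : substr S 0 j = S.take j := by
  simp [substr]

lemma substr_length_right (S : List α) (i : ℕ) : substr S i S.length = S.drop i := by
  simp [substr]

lemma Pmat_eq (A B : List α) (i j : ℕ) : Pmat A B i j = LCS (B.drop i) (A.take j) := by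
  rw [Pmat, substr_length_right, substr_zero_left]

/-- if Diff[i,j] = 1 then Diff[i,j'] = 1 for all 0 ≤ j' ≤ j. -/
theorem stmt_14 {α : Type*} (A B : List α) (m n : ℕ)
    (hA : A.length = m) (hB : B.length = n) (σ : α)
    (hNonpos : ∀ i, 1 ≤ i → i ≤ n → ∀ j, 1 ≤ j → j ≤ m →
      density (Pmat A B) i j ≤ 0) :
    ∀ i ≤ n, ∀ j ≤ m, ∀ j' ≤ j,
      (LCS (substr B i n) (σ :: substr A 0 j) : ℤ) - Pmat A B i j = 1 →
      (LCS (substr B i n) (σ :: substr A 0 j') : ℤ) - Pmat A B i j' = 1 := by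
  intro i _ j hj j' hj' hdiff
  subst hA hB
  simp only [substr_zero_left, substr_length_right, Pmat_eq] at hdiff ⊢
  by_cases hσ : σ ∈ B.drop i
  · obtain ⟨s, k, hik, hk, hsplit, hs⟩ := List.exists_drop_eq_append_cons_drop hσ
    have hanti := sub_le_sub_of_density_nonpos hNonpos hik.le hk hj' hj
    simp only [Pmat_eq] at hanti
    rw [hsplit] at hdiff hanti ⊢
    have hP_eq : LCS (B.drop k) (A.take j) = LCS (s ++ σ :: B.drop k) (A.take j) :=
      (LCS_append_cons_cons_right_eq_succ_iff hs).mp (by omega)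
    have hP'_eq : LCS (B.drop k) (A.take j') = LCS (s ++ σ :: B.drop k) (A.take j') :=
      le_antisymm (LCS_le_LCS_append_cons _ _ _ _) (by omega)
    have := (LCS_append_cons_cons_right_eq_succ_iff hs).mpr hP'_eq
    omega
  · rw [LCS_cons_right_of_not_mem hσ] at hdiff
    simp at hdiff
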